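/- arXiv:1408.0143 — 4 statements merged into one kernel-verified Lean document; each statement's English description precedes it below -/
import Mathlib

section
/- Let N ≥ 1 be an integer. Every 3-clique in Δ_N (i.e., every set of three mutually adjacent locations) is either a black 3-clique or a white 3-clique, and not both. Moreover, the map sending (r,s,t) ∈ Δ_{N−1} to the set {(r+1,s,t), (r,s+1,t), (r,s,t+1)} is a bijection from Δ_{N−1} onto the set of black 3-cliques in Δ_N, and (when N ≥ 2) the map sending (r,s,t) ∈ Δ_{N−2} to the set {(r,s+1,t+1), (r+1,s,t+1), (r+1,s+1,t)} is a bijection from Δ_{N−2} onto the set of white 3-cliques in Δ_N. -/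
/-!
Adjacent locations differ by at most one in every coordinate, so three mutually adjacent
locations `x, y, z` lie in the unit cube `[m, m + 1]` over their coordinatewise minimum
`m = x ⊓ y ⊓ z`. A location of `Δ_N` in that cube is `m` plus the indicator of a subset of
`{0, 1, 2}` of size `N - |m|`; as `x ≠ y`, this size is `1` or `2`, and the three locations
with that size are exactly the black, resp. white, 3-clique of `m`.
-/

/-- `Δ_N`: the set of triples of natural numbers with sum `N`. -/
def BA.Delta (N : ℕ) : Set (Fin 3 → ℕ) := {v | v 0 + v 1 + v 2 = N}

/-- Adjacency: `u - v = e_i - e_j` (computed in `ℤ³`) for some `i ≠ j`. -/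
def BA.Adj (u v : Fin 3 → ℕ) : Prop :=
  ∃ i j : Fin 3, i ≠ j ∧ ∀ k, (u k : ℤ) - (v k : ℤ) =
    (if k = i then 1 else 0) - (if k = j then 1 else 0)

/-- The black 3-clique attached to `(r,s,t)`. -/
def BA.blackSet (r s t : ℕ) : Set (Fin 3 → ℕ) :=
  {![r + 1, s, t], ![r, s + 1, t], ![r, s, t + 1]}

/-- The white 3-clique attached to `(r,s,t)`. -/
def BA.whiteSet (r s t : ℕ) : Set (Fin 3 → ℕ) :=
  {![r, s + 1, t + 1], ![r + 1, s, t + 1], ![r + 1, s + 1, t]}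

/-- `S` is a black 3-clique in `Δ_N`. -/
def BA.IsBlack (N : ℕ) (S : Set (Fin 3 → ℕ)) : Prop :=
  ∃ r s t : ℕ, r + s + t + 1 = N ∧ S = BA.blackSet r s t

/-- `S` is a white 3-clique in `Δ_N`. -/
def BA.IsWhite (N : ℕ) (S : Set (Fin 3 → ℕ)) : Prop :=
  ∃ r s t : ℕ, r + s + t + 2 = N ∧ S = BA.whiteSet r s t

/-- `S` is a 3-clique in `Δ_N`: a set of three mutually adjacent locations. -/
def BA.IsClique3 (N : ℕ) (S : Set (Fin 3 → ℕ)) : Prop :=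
  S ⊆ BA.Delta N ∧ S.ncard = 3 ∧ ∀ x ∈ S, ∀ y ∈ S, x ≠ y → BA.Adj x y

namespace BA

lemma funext_fin_three {α : Type*} {u v : Fin 3 → α} (h₀ : u 0 = v 0) (h₁ : u 1 = v 1)
    (h₂ : u 2 = v 2) : u = v :=
  funext fun k => by fin_cases k <;> assumption

lemma Adj.symm {u v : Fin 3 → ℕ} (h : Adj u v) : Adj v u := by
  obtain ⟨i, j, hij, h⟩ := h
  exact ⟨j, i, hij.symm, fun k => by linarith [h k]⟩

lemma Adj.le_add_one {u v : Fin 3 → ℕ} (h : Adj u v) (k : Fin 3) : u k ≤ v k + 1 := by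
  obtain ⟨i, j, -, h⟩ := h
  have := h k
  split_ifs at this <;> omega

lemma subset_Icc_inf {x y z : Fin 3 → ℕ} (hxy : Adj x y) (hxz : Adj x z) (hyz : Adj y z) :
    ({x, y, z} : Set (Fin 3 → ℕ)) ⊆ Set.Icc (x ⊓ y ⊓ z) (x ⊓ y ⊓ z + 1) := by
  intro v hv
  have bounds (k : Fin 3) :
      (x ⊓ y ⊓ z) k ≤ v k ∧ v k ≤ (x ⊓ y ⊓ z + 1) k := by
    have := hxy.le_add_one k; have := hxy.symm.le_add_one k
    have := hxz.le_add_one k; have := hxz.symm.le_add_one k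
    have := hyz.le_add_one k; have := hyz.symm.le_add_one k
    simp only [Pi.add_apply, Pi.inf_apply, Pi.one_apply]
    rcases hv with rfl | rfl | rfl <;> omega
  exact ⟨fun k => (bounds k).1, fun k => (bounds k).2⟩

lemma mem_blackSet_iff {v : Fin 3 → ℕ} {r s t : ℕ} : v ∈ blackSet r s t ↔
    (v 0 = r + 1 ∧ v 1 = s ∧ v 2 = t) ∨ (v 0 = r ∧ v 1 = s + 1 ∧ v 2 = t) ∨
    (v 0 = r ∧ v 1 = s ∧ v 2 = t + 1) := by
  simp [blackSet, funext_iff, Fin.forall_fin_succ]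

lemma mem_whiteSet_iff {v : Fin 3 → ℕ} {r s t : ℕ} : v ∈ whiteSet r s t ↔
    (v 0 = r ∧ v 1 = s + 1 ∧ v 2 = t + 1) ∨ (v 0 = r + 1 ∧ v 1 = s ∧ v 2 = t + 1) ∨
    (v 0 = r + 1 ∧ v 1 = s + 1 ∧ v 2 = t) := by
  simp [whiteSet, funext_iff, Fin.forall_fin_succ]

section Icc

variable {m v : Fin 3 → ℕ}

lemma mem_blackSet_of_mem_Icc (hv : v ∈ Set.Icc m (m + 1))
    (hsum : v 0 + v 1 + v 2 = m 0 + m 1 + m 2 + 1) : v ∈ blackSet (m 0) (m 1) (m 2) := by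
  have := hv.1 0; have := hv.1 1; have := hv.1 2
  have := hv.2 0; have := hv.2 1; have := hv.2 2
  simp only [Pi.add_apply, Pi.one_apply] at *
  rw [mem_blackSet_iff]
  omega

lemma mem_whiteSet_of_mem_Icc (hv : v ∈ Set.Icc m (m + 1))
    (hsum : v 0 + v 1 + v 2 = m 0 + m 1 + m 2 + 2) : v ∈ whiteSet (m 0) (m 1) (m 2) := by
  have := hv.1 0; have := hv.1 1; have := hv.1 2
  have := hv.2 0; have := hv.2 1; have := hv.2 2
  simp only [Pi.add_apply, Pi.one_apply] at *
  rw [mem_whiteSet_iff]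
  omega

lemma sum_eq_add_one_or_add_two_of_mem_Icc {w : Fin 3 → ℕ} (hv : v ∈ Set.Icc m (m + 1))
    (hw : w ∈ Set.Icc m (m + 1)) (hvw : v ≠ w) (hsum : v 0 + v 1 + v 2 = w 0 + w 1 + w 2) :
    v 0 + v 1 + v 2 = m 0 + m 1 + m 2 + 1 ∨ v 0 + v 1 + v 2 = m 0 + m 1 + m 2 + 2 := by
  have := hv.1 0; have := hv.1 1; have := hv.1 2
  have := hv.2 0; have := hv.2 1; have := hv.2 2
  have := hw.1 0; have := hw.1 1; have := hw.1 2
  have := hw.2 0; have := hw.2 1; have := hw.2 2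
  simp only [Pi.add_apply, Pi.one_apply] at *
  by_contra
  exact hvw (funext_fin_three (by omega) (by omega) (by omega))

end Icc

lemma eq_of_subset_triple_of_ncard_eq_three {α : Type*} {S : Set α} {a b c : α}
    (h : S ⊆ {a, b, c}) (hS : S.ncard = 3) : S = {a, b, c} := by
  refine Set.eq_of_subset_of_ncard_le h ?_ (Set.toFinite _)
  calc ({a, b, c} : Set α).ncard ≤ ({b, c} : Set α).ncard + 1 := Set.ncard_insert_le _ _
    _ ≤ ({c} : Set α).ncard + 1 + 1 := by gcongr; exact Set.ncard_insert_le _ _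
    _ = S.ncard := by simp [hS]

theorem IsClique3.isBlack_or_isWhite {N : ℕ} {S : Set (Fin 3 → ℕ)} (hS : IsClique3 N S) :
    IsBlack N S ∨ IsWhite N S := by
  obtain ⟨hΔ, hcard, hadj⟩ := hS
  obtain ⟨x, y, z, hxy, hxz, hyz, rfl⟩ := Set.ncard_eq_three.mp hcard
  have hx : x ∈ ({x, y, z} : Set (Fin 3 → ℕ)) := by simp
  have hy : y ∈ ({x, y, z} : Set (Fin 3 → ℕ)) := by simp
  have hz : z ∈ ({x, y, z} : Set (Fin 3 → ℕ)) := by simp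
  set m := x ⊓ y ⊓ z
  have hIcc := subset_Icc_inf (hadj x hx y hy hxy) (hadj x hx z hz hxz) (hadj y hy z hz hyz)
  have hsum {v} (hv : v ∈ ({x, y, z} : Set (Fin 3 → ℕ))) :
      v 0 + v 1 + v 2 = x 0 + x 1 + x 2 := (hΔ hv).trans (hΔ hx).symm
  rcases sum_eq_add_one_or_add_two_of_mem_Icc (hIcc hx) (hIcc hy) hxy (hsum hy).symm with h | h
  · refine .inl ⟨m 0, m 1, m 2, h.symm.trans (hΔ hx), ?_⟩
    refine eq_of_subset_triple_of_ncard_eq_three (fun v hv => ?_) hcard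
    exact mem_blackSet_of_mem_Icc (hIcc hv) ((hsum hv).trans h)
  · refine .inr ⟨m 0, m 1, m 2, h.symm.trans (hΔ hx), ?_⟩
    refine eq_of_subset_triple_of_ncard_eq_three (fun v hv => ?_) hcard
    exact mem_whiteSet_of_mem_Icc (hIcc hv) ((hsum hv).trans h)

lemma blackSet_ne_whiteSet (r s t p q w : ℕ) : blackSet r s t ≠ whiteSet p q w := by
  intro h
  have h₁ : ![r + 1, s, t] ∈ whiteSet p q w := h ▸ by simp [blackSet]
  have h₂ : ![r, s + 1, t] ∈ whiteSet p q w := h ▸ by simp [blackSet]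
  have h₃ : ![r, s, t + 1] ∈ whiteSet p q w := h ▸ by simp [blackSet]
  simp only [mem_whiteSet_iff, Matrix.cons_val_zero, Matrix.cons_val_one, Matrix.cons_val]
    at h₁ h₂ h₃
  omega

lemma blackSet_injective :
    Function.Injective fun w : Fin 3 → ℕ => blackSet (w 0) (w 1) (w 2) := by
  intro u v (h : blackSet (u 0) (u 1) (u 2) = blackSet (v 0) (v 1) (v 2))
  have h₁ : ![u 0 + 1, u 1, u 2] ∈ blackSet (v 0) (v 1) (v 2) := h ▸ by simp [blackSet]
  have h₂ : ![u 0, u 1 + 1, u 2] ∈ blackSet (v 0) (v 1) (v 2) := h ▸ by simp [blackSet]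
  simp only [mem_blackSet_iff, Matrix.cons_val_zero, Matrix.cons_val_one, Matrix.cons_val]
    at h₁ h₂
  exact funext_fin_three (by omega) (by omega) (by omega)

lemma whiteSet_injective :
    Function.Injective fun w : Fin 3 → ℕ => whiteSet (w 0) (w 1) (w 2) := by
  intro u v (h : whiteSet (u 0) (u 1) (u 2) = whiteSet (v 0) (v 1) (v 2))
  have h₁ : ![u 0, u 1 + 1, u 2 + 1] ∈ whiteSet (v 0) (v 1) (v 2) := h ▸ by simp [whiteSet]
  have h₂ : ![u 0 + 1, u 1, u 2 + 1] ∈ whiteSet (v 0) (v 1) (v 2) := h ▸ by simp [whiteSet]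
  simp only [mem_whiteSet_iff, Matrix.cons_val_zero, Matrix.cons_val_one, Matrix.cons_val]
    at h₁ h₂
  exact funext_fin_three (by omega) (by omega) (by omega)

lemma bijOn_blackSet (n : ℕ) :
    Set.BijOn (fun w : Fin 3 → ℕ => blackSet (w 0) (w 1) (w 2)) (Delta n)
      {S | IsBlack (n + 1) S} := by
  refine ⟨fun w hw => ⟨w 0, w 1, w 2, congrArg (· + 1) hw, rfl⟩,
    blackSet_injective.injOn, ?_⟩
  rintro S ⟨r, s, t, h, rfl⟩
  exact ⟨![r, s, t], show r + s + t = n by omega, by simp⟩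

lemma bijOn_whiteSet (n : ℕ) :
    Set.BijOn (fun w : Fin 3 → ℕ => whiteSet (w 0) (w 1) (w 2)) (Delta n)
      {S | IsWhite (n + 2) S} := by
  refine ⟨fun w hw => ⟨w 0, w 1, w 2, congrArg (· + 2) hw, rfl⟩,
    whiteSet_injective.injOn, ?_⟩
  rintro S ⟨r, s, t, h, rfl⟩
  exact ⟨![r, s, t], show r + s + t = n by omega, by simp⟩

end BA

/-- For `N ≥ 1`: every 3-clique in `Δ_N` is black or white and not both;
`(r,s,t) ↦ {(r+1,s,t),(r,s+1,t),(r,s,t+1)}` is a bijection from `Δ_{N-1}` onto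
the black 3-cliques; and for `N ≥ 2`,
`(r,s,t) ↦ {(r,s+1,t+1),(r+1,s,t+1),(r+1,s+1,t)}` is a bijection from
`Δ_{N-2}` onto the white 3-cliques. -/
theorem stmt5 (N : ℕ) (hN : 1 ≤ N) :
    (∀ S : Set (Fin 3 → ℕ), BA.IsClique3 N S →
      (BA.IsBlack N S ∨ BA.IsWhite N S) ∧ ¬ (BA.IsBlack N S ∧ BA.IsWhite N S)) ∧
    Set.BijOn (fun w : Fin 3 → ℕ => BA.blackSet (w 0) (w 1) (w 2))
      (BA.Delta (N - 1)) {S | BA.IsBlack N S} ∧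
    (2 ≤ N →
      Set.BijOn (fun w : Fin 3 → ℕ => BA.whiteSet (w 0) (w 1) (w 2))
        (BA.Delta (N - 2)) {S | BA.IsWhite N S}) := by
  refine ⟨fun S hS => ⟨hS.isBlack_or_isWhite, ?_⟩, ?_, fun h2 => ?_⟩
  · rintro ⟨⟨r, s, t, -, rfl⟩, ⟨p, q, w, -, h⟩⟩
    exact BA.blackSet_ne_whiteSet r s t p q w h
  · simpa only [Nat.sub_add_cancel hN] using BA.bijOn_blackSet (N - 1)
  · simpa only [Nat.sub_add_cancel h2] using BA.bijOn_whiteSet (N - 2)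
end

section
/- Let N be a natural number and let λ = (r,s,t) and μ = (r',s',t') be locations in Δ_N. Then min(r,r') + min(s,s') + min(t,t') = N − ∂(λ,μ), where ∂ denotes the graph distance on Δ_N. (In other words, the rank of the componentwise meet λ ∧ μ equals N minus the distance between λ and μ.) -/
/-- A walk of length `n` in `Δ_N` from `u` to `v`. -/
def BA.IsWalk (N n : ℕ) (f : ℕ → Fin 3 → ℕ) (u v : Fin 3 → ℕ) : Prop :=
  f 0 = u ∧ f n = v ∧ (∀ i ≤ n, f i ∈ BA.Delta N) ∧ ∀ i < n, BA.Adj (f i) (f (i + 1))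

/-- The graph distance on `Δ_N`: the least length of a walk from `u` to `v`. -/
noncomputable def BA.dist (N : ℕ) (u v : Fin 3 → ℕ) : ℕ :=
  sInf {n | ∃ f : ℕ → Fin 3 → ℕ, BA.IsWalk N n f u v}

/-! The distance from `u` to `v` is the total excess `∑ₖ (uₖ - vₖ)⁺`: one move changes it by
at most one, and while `u ≠ v` a unit can be moved from a coordinate where `u` exceeds `v` to
one where it falls short, lowering it by exactly one. Since `min a b + (a - b)⁺ = a`, the sum
of the minima is `N` minus the excess. -/

open Finset

namespace BA

def excess (u v : Fin 3 → ℕ) : ℕ := ∑ k, (u k - v k)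

lemma mem_Delta_iff_sum_eq {N : ℕ} {u : Fin 3 → ℕ} : u ∈ Delta N ↔ ∑ k, u k = N := by
  simp [Delta, Fin.sum_univ_three]

lemma sum_eq_of_adj {u u' : Fin 3 → ℕ} (h : Adj u u') : ∑ k, u k = ∑ k, u' k := by
  obtain ⟨i, j, -, h⟩ := h
  have hdiff : ∑ k, ((u k : ℤ) - u' k) = 0 := by
    simp only [h, sum_sub_distrib, sum_ite_eq', mem_univ, if_true, sub_self]
  rw [sum_sub_distrib, sub_eq_zero] at hdiff
  exact_mod_cast hdiff

lemma mem_Delta_of_adj {N : ℕ} {u u' : Fin 3 → ℕ} (h : Adj u u') (hu : u ∈ Delta N) :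
    u' ∈ Delta N := by
  rw [mem_Delta_iff_sum_eq] at hu ⊢
  rw [← sum_eq_of_adj h, hu]

lemma excess_le_of_adj {w w' : Fin 3 → ℕ} (h : Adj w w') (v : Fin 3 → ℕ) :
    excess w v ≤ excess w' v + 1 := by
  obtain ⟨i, j, -, h⟩ := h
  calc excess w v ≤ ∑ k, ((w' k - v k) + if k = i then 1 else 0) := by
        refine sum_le_sum fun k _ => ?_
        have hk := h k
        split_ifs at hk ⊢ <;> omega
    _ = excess w' v + 1 := by simp [excess, sum_add_distrib]

lemma sum_min_add_excess (u v : Fin 3 → ℕ) : ∑ k, min (u k) (v k) + excess u v = ∑ k, u k := by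
  rw [excess, ← sum_add_distrib]
  exact sum_congr rfl fun k _ => by omega

lemma eq_of_excess_eq_zero {N : ℕ} {u v : Fin 3 → ℕ} (hu : u ∈ Delta N) (hv : v ∈ Delta N)
    (h : excess u v = 0) : u = v := by
  rw [mem_Delta_iff_sum_eq] at hu hv
  have hle : ∀ k ∈ univ, u k ≤ v k := by
    simpa [excess, sum_eq_zero_iff, Nat.sub_eq_zero_iff_le] using h
  funext k
  exact (sum_eq_sum_iff_of_le hle).1 (hu.trans hv.symm) k (mem_univ k)

def move (u : Fin 3 → ℕ) (i j : Fin 3) : Fin 3 → ℕ :=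
  fun k => u k - (if k = i then 1 else 0) + (if k = j then 1 else 0)

lemma adj_move {u : Fin 3 → ℕ} {i j : Fin 3} (hij : i ≠ j) (hi : 0 < u i) :
    Adj u (move u i j) := by
  refine ⟨i, j, hij, fun k => ?_⟩
  by_cases hki : k = i
  · subst hki
    simp only [move, ↓reduceIte, hij, add_zero, sub_zero]
    omega
  · by_cases hkj : k = j
    · subst hkj; simp [move, hki]
    · simp [move, hki, hkj]

lemma excess_move_add_one {u v : Fin 3 → ℕ} {i j : Fin 3} (hij : i ≠ j) (hi : v i < u i)
    (hj : u j < v j) : excess (move u i j) v + 1 = excess u v := by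
  calc excess (move u i j) v + 1
      = ∑ k, ((move u i j k - v k) + if k = i then 1 else 0) := by
        simp [excess, sum_add_distrib]
    _ = excess u v := sum_congr rfl fun k _ => by
        unfold move
        by_cases hki : k = i
        · subst hki; simp only [↓reduceIte, hij, add_zero]; omega
        · by_cases hkj : k = j
          · subst hkj; simp only [hki, ↓reduceIte, tsub_zero, add_zero]; omega
          · simp [hki, hkj]

lemma exists_adj_excess_eq {N d : ℕ} {u v : Fin 3 → ℕ} (hu : u ∈ Delta N) (hv : v ∈ Delta N)
    (h : excess u v = d + 1) : ∃ u', Adj u u' ∧ excess u' v = d := by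
  obtain ⟨i, -, hi⟩ := exists_ne_zero_of_sum_ne_zero (h.trans_ne d.succ_ne_zero)
  have hi : v i < u i := by omega
  obtain ⟨j, hj⟩ : ∃ j, u j < v j := by
    by_contra! hle
    rw [mem_Delta_iff_sum_eq] at hu hv
    have := (sum_eq_sum_iff_of_le fun k _ => hle k).1 (hv.trans hu.symm) i (mem_univ i)
    omega
  have hij : i ≠ j := by rintro rfl; omega
  exact ⟨move u i j, adj_move hij (by omega), by
    have := excess_move_add_one hij hi hj; omega⟩

namespace IsWalk

variable {N n : ℕ} {f : ℕ → Fin 3 → ℕ} {u v : Fin 3 → ℕ}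

lemma const (hu : u ∈ Delta N) : IsWalk N 0 (fun _ => u) u u :=
  ⟨rfl, rfl, fun _ _ => hu, fun _ h => absurd h (Nat.not_lt_zero _)⟩

lemma tail (h : IsWalk N (n + 1) f u v) : IsWalk N n (fun i => f (i + 1)) (f 1) v :=
  ⟨rfl, h.2.1, fun i hi => h.2.2.1 (i + 1) (by omega), fun i hi => h.2.2.2 (i + 1) (by omega)⟩

lemma cons {w : Fin 3 → ℕ} (h : IsWalk N n f u v) (hw : w ∈ Delta N) (hadj : Adj w u) :
    IsWalk N (n + 1) (fun i => if i = 0 then w else f (i - 1)) w v := by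
  obtain ⟨h0, hn, hmem, hstep⟩ := h
  refine ⟨rfl, by simpa using hn, fun i hi => ?_, fun i hi => ?_⟩
  · rcases i with _ | i
    · simpa using hw
    · simpa using hmem i (by omega)
  · rcases i with _ | i
    · simpa [h0] using hadj
    · simpa using hstep i (by omega)

lemma excess_le (h : IsWalk N n f u v) : excess u v ≤ n := by
  induction n generalizing f u with
  | zero =>
    obtain ⟨h0, hn, -⟩ := h
    simp [excess, ← h0, ← hn]
  | succ n ih =>
    have hstep : excess u v ≤ excess (f 1) v + 1 :=
      h.1 ▸ excess_le_of_adj (h.2.2.2 0 (by omega)) v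
    have := ih h.tail
    omega

end IsWalk

lemma exists_isWalk_excess {N : ℕ} {u v : Fin 3 → ℕ} (hu : u ∈ Delta N) (hv : v ∈ Delta N) :
    ∃ f, IsWalk N (excess u v) f u v := by
  generalize hd : excess u v = d
  induction d generalizing u with
  | zero => exact eq_of_excess_eq_zero hu hv hd ▸ ⟨_, IsWalk.const hu⟩
  | succ d ih =>
    obtain ⟨u', hadj, hd'⟩ := exists_adj_excess_eq hu hv hd
    obtain ⟨f, hf⟩ := ih (mem_Delta_of_adj hadj hu) hd'
    exact ⟨_, hf.cons hu hadj⟩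

lemma dist_eq_excess {N : ℕ} {u v : Fin 3 → ℕ} (hu : u ∈ Delta N) (hv : v ∈ Delta N) :
    dist N u v = excess u v := by
  obtain ⟨f, hf⟩ := exists_isWalk_excess hu hv
  exact le_antisymm (Nat.sInf_le ⟨f, hf⟩)
    (le_csInf ⟨_, f, hf⟩ fun _ ⟨_, hg⟩ => hg.excess_le)

end BA

/-- For locations `λ = (r,s,t)` and `μ = (r',s',t')` of `Δ_N`:
`min(r,r') + min(s,s') + min(t,t') = N - ∂(λ,μ)`. -/
theorem stmt7 (N : ℕ) (u v : Fin 3 → ℕ)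
    (hu : u ∈ BA.Delta N) (hv : v ∈ BA.Delta N) :
    min (u 0) (v 0) + min (u 1) (v 1) + min (u 2) (v 2) = N - BA.dist N u v := by
  have hsum := BA.sum_min_add_excess u v
  rw [BA.mem_Delta_iff_sum_eq.1 hu, Fin.sum_univ_three] at hsum
  rw [BA.dist_eq_excess hu hv]
  omega
end

section
/- Let F be a field, N a natural number, and V an (N+1)-dimensional vector space over F. Let {U_i}_{i=0}^N, {U'_i}_{i=0}^N, {U''_i}_{i=0}^N be totally opposite flags on V. For each location λ = (r,s,t) in Δ_N define B_λ = U_{N−r} ∩ U'_{N−s} ∩ U''_{N−t}. Then: each B_λ is a one-dimensional subspace of V; for each line L in Δ_N the sum ∑_{λ∈L} B_λ is direct (the family (B_λ)_{λ∈L} of subspaces is independent); and for each black 3-clique C in Δ_N the sum ∑_{λ∈C} B_λ is not direct. In other words, B is a Billiard Array on V. -/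
/-- A line in `Δ_N`: the set of locations with a given `η`-coordinate `c`. -/
def BA.IsLine (N : ℕ) (L : Set (Fin 3 → ℕ)) : Prop :=
  ∃ (η : Fin 3) (c : ℕ), c ≤ N ∧ L = {v ∈ BA.Delta N | v η = c}

/-- A Billiard Array on `V`: a function assigning to each location of `Δ_N` a
one-dimensional subspace of `V`, such that the sum over each line is direct and
the sum over each black 3-clique is not direct. -/
def BA.IsBilliardArray {F V : Type*} [Field F] [AddCommGroup V] [Module F V]
    (N : ℕ) (B : (Fin 3 → ℕ) → Submodule F V) : Prop :=
  (∀ v ∈ BA.Delta N, Module.finrank F (B v) = 1) ∧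
  (∀ L : Set (Fin 3 → ℕ), BA.IsLine N L → iSupIndep fun x : L => B x.1) ∧
  (∀ r s t : ℕ, r + s + t + 1 = N → ¬ iSupIndep fun x : BA.blackSet r s t => B x.1)

/-- A flag on `V` (of diameter `N`): nested subspaces `U_0 ⊆ ⋯ ⊆ U_N` with
`dim U_i = i + 1`. -/
def BA.IsFlag {F V : Type*} [Field F] [AddCommGroup V] [Module F V]
    (N : ℕ) (U : ℕ → Submodule F V) : Prop :=
  (∀ i ≤ N, Module.finrank F (U i) = i + 1) ∧ ∀ i, i + 1 ≤ N → U i ≤ U (i + 1)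

/-- Two flags are opposite whenever `U_i ∩ U'_j = 0` for `i + j < N`. -/
def BA.Opposite {F V : Type*} [Field F] [AddCommGroup V] [Module F V]
    (N : ℕ) (U U' : ℕ → Submodule F V) : Prop :=
  ∀ i j : ℕ, i ≤ N → j ≤ N → i + j < N → U i ⊓ U' j = ⊥

/-- Three flags are totally opposite whenever
`U_{N-r} ∩ U'_{N-s} ∩ U''_{N-t} = 0` for all `r,s,t ≤ N` with `r+s+t > N`. -/
def BA.TotallyOpposite {F V : Type*} [Field F] [AddCommGroup V] [Module F V]
    (N : ℕ) (U U' U'' : ℕ → Submodule F V) : Prop :=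
  ∀ r s t : ℕ, r ≤ N → s ≤ N → t ≤ N → N < r + s + t →
    U (N - r) ⊓ U' (N - s) ⊓ U'' (N - t) = ⊥

open Module

/-!
For `r + s + t ≤ N` the subspace `U_{N-r} ∩ U'_{N-s} ∩ U''_{N-t}` has dimension exactly
`N + 1 - (r + s + t)`: at least that, as an intersection of subspaces of codimensions `r, s, t`,
and at most that, since `U''_{r+s-1}` meets `U_{N-r} ∩ U'_{N-s}` trivially by total oppositeness.
Hence every `B_λ` with `λ ∈ Δ_N` is one-dimensional, while the three cells of the black 3-clique at
`(r, s, t) ∈ Δ_{N-1}` all lie in the 2-dimensional space attached to `(r, s, t)`, so their sum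
cannot be direct. Along a line `r = c`, ordered by `s`, the cell at `(c, s, t)` lies in
`U''_{N-t}` and meets `U''_{N-t-1}`, which contains all earlier cells, trivially; this triangular
shape makes the sum direct. The other two kinds of lines follow by cyclically permuting the
coordinates together with the flags.
-/

namespace Submodule

section

variable {R M : Type*} [Ring R] [AddCommGroup M] [Module R M]

theorem iSupIndep_of_disjoint_iSup_lt {ι β : Type*} [LinearOrder β] {p : ι → Submodule R M}
    (f : ι → β) (hf : Function.Injective f)
    (h : ∀ i, Disjoint (p i) (⨆ (j) (_ : f j < f i), p j)) : iSupIndep p := by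
  classical
  rw [iSupIndep_iff_finsetSum_eq_zero_imp_eq_zero]
  intro s
  induction s using Finset.induction_on_max_value f with
  | empty => simp
  | insert a s ha hmax ih =>
    intro v hv hsum
    rw [Finset.sum_insert ha, add_eq_zero_iff_eq_neg] at hsum
    have hva : v a = 0 := by
      refine disjoint_def.mp (h a) _ (hv a (Finset.mem_insert_self a s)) ?_
      rw [hsum]
      refine neg_mem (sum_mem fun j hj => ?_)
      have hlt : f j < f a := (hmax j hj).lt_of_ne (hf.ne (ne_of_mem_of_not_mem hj ha))
      exact le_iSup₂ (f := fun j (_ : f j < f a) => p j) j hlt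
        (hv j (Finset.mem_insert_of_mem hj))
    rw [hva, eq_comm, neg_eq_zero] at hsum
    intro i hi
    rcases Finset.mem_insert.mp hi with rfl | hi
    · exact hva
    · exact ih v (fun j hj => hv j (Finset.mem_insert_of_mem hj)) hsum i hi

end

section

variable {F V : Type*} [Field F] [AddCommGroup V] [Module F V] [FiniteDimensional F V]

theorem finrank_add_finrank_le_finrank_inf_add (A B : Submodule F V) :
    finrank F A + finrank F B ≤ finrank F ↥(A ⊓ B) + finrank F V := by
  have := finrank_sup_add_finrank_inf_eq A B
  have := (A ⊔ B).finrank_le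
  omega

theorem finrank_inf_add_finrank_le_of_le (W : Submodule F V) {A B : Submodule F V}
    (hAB : A ≤ B) :
    finrank F ↥(W ⊓ B) + finrank F A ≤ finrank F ↥(W ⊓ A) + finrank F B := by
  have hsum := finrank_sup_add_finrank_inf_eq (W ⊓ B) A
  rw [inf_assoc, inf_eq_right.mpr hAB] at hsum
  have := finrank_mono (sup_le (inf_le_right : W ⊓ B ≤ B) hAB)
  omega

theorem not_iSupIndep_of_finrank_lt {ι : Type*} [Finite ι] {p : ι → Submodule F V}
    {W : Submodule F V} (hle : ∀ i, p i ≤ W) (hne : ∀ i, p i ≠ ⊥)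
    (hlt : finrank F W < Nat.card ι) : ¬ iSupIndep p := by
  intro hp
  choose w hw hw0 using fun i => (p i).ne_bot_iff.mp (hne i)
  have hli : LinearIndependent F fun i => (⟨w i, hle i (hw i)⟩ : W) :=
    .of_comp W.subtype (hp.linearIndependent _ hw hw0)
  have := hli.cardinalMk_le_finrank
  rw [← Nat.cast_card] at this
  exact hlt.not_ge (by exact_mod_cast this)

end

end Submodule

namespace BA

variable {F V : Type*} [Field F] [AddCommGroup V] [Module F V] {N : ℕ}
  {U U' U'' : ℕ → Submodule F V}

theorem IsFlag.mono (hU : IsFlag N U) {i j : ℕ} (hij : i ≤ j) (hj : j ≤ N) : U i ≤ U j := by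
  induction j, hij using Nat.le_induction with
  | base => exact le_rfl
  | succ j hij ih => exact (ih (by omega)).trans (hU.2 j hj)

theorem TotallyOpposite.rotate (hT : TotallyOpposite N U U' U'') :
    TotallyOpposite N U' U'' U := by
  intro r s t hr hs ht hN
  rw [inf_comm, ← inf_assoc]
  exact hT t r s ht hr hs (by omega)

/-- The paper's `B_λ`, for the location `λ = v`. -/
def cell (N : ℕ) (U U' U'' : ℕ → Submodule F V) (v : Fin 3 → ℕ) : Submodule F V :=
  U (N - v 0) ⊓ U' (N - v 1) ⊓ U'' (N - v 2)

theorem iSupIndep_cell_line_zero (hU'' : IsFlag N U'') (hT : TotallyOpposite N U U' U'')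
    (c : ℕ) : iSupIndep fun x : {v ∈ Delta N | v 0 = c} => cell N U U' U'' x := by
  refine Submodule.iSupIndep_of_disjoint_iSup_lt (fun x => x.1 1) ?_ fun x => ?_
  · rintro ⟨x, hx, hx0⟩ ⟨y, hy, hy0⟩ (h : x 1 = y 1)
    have hx : x 0 + x 1 + x 2 = N := hx
    have hy : y 0 + y 1 + y 2 = N := hy
    ext i
    fin_cases i <;> simp <;> omega
  obtain ⟨x, hx, hx0⟩ := x
  have hx : x 0 + x 1 + x 2 = N := hx
  rcases Nat.eq_zero_or_pos (x 1) with h0 | hpos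
  · simp [h0]
  have hbot : cell N U U' U'' x ⊓ U'' (N - (x 2 + 1)) = ⊥ :=
    eq_bot_iff.mpr <| (inf_le_inf_right _ inf_le_left).trans
      (hT (x 0) (x 1) (x 2 + 1) (by omega) (by omega) (by omega) (by omega)).le
  refine (disjoint_iff.mpr hbot).mono_right (iSup₂_le fun ⟨y, hy, hy0⟩ hlt => ?_)
  have hy : y 0 + y 1 + y 2 = N := hy
  have hlt : y 1 < x 1 := hlt
  change cell N U U' U'' y ≤ _
  exact inf_le_right.trans (hU''.mono (by omega) (by omega))

theorem iSupIndep_cell_line_rotate {η : Fin 3} {c : ℕ}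
    (h : iSupIndep fun x : {v ∈ Delta N | v η = c} => cell N U' U'' U x) :
    iSupIndep fun x : {v ∈ Delta N | v (η + 1) = c} => cell N U U' U'' x := by
  let rotate : {v ∈ Delta N | v (η + 1) = c} → {v ∈ Delta N | v η = c} := fun x =>
    ⟨x.1 ∘ (· + 1), (add_rotate (x.1 0) (x.1 1) (x.1 2)).symm.trans x.2.1, x.2.2⟩
  have hrotate : Function.Injective rotate := fun x y hxy => Subtype.ext <|
    (Equiv.addRight (1 : Fin 3)).surjective.injective_comp_right (congrArg Subtype.val hxy)
  convert h.comp hrotate using 1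
  funext x
  change _ = U' (N - x.1 1) ⊓ U'' (N - x.1 2) ⊓ U (N - x.1 0)
  rw [cell, inf_assoc, inf_comm]

theorem iSupIndep_cell_line (hU : IsFlag N U) (hU' : IsFlag N U') (hU'' : IsFlag N U'')
    (hT : TotallyOpposite N U U' U'') (η : Fin 3) (c : ℕ) :
    iSupIndep fun x : {v ∈ Delta N | v η = c} => cell N U U' U'' x := by
  fin_cases η
  · exact iSupIndep_cell_line_zero hU'' hT c
  · exact iSupIndep_cell_line_rotate (iSupIndep_cell_line_zero hU hT.rotate c)
  · exact iSupIndep_cell_line_rotate (iSupIndep_cell_line_rotate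
      (iSupIndep_cell_line_zero hU' hT.rotate.rotate c))

theorem blackSet_subset_Delta {r s t : ℕ} (hN : r + s + t + 1 = N) :
    blackSet r s t ⊆ Delta N := by
  rintro x (rfl | rfl | rfl)
  · exact show r + 1 + s + t = N by omega
  · exact show r + (s + 1) + t = N by omega
  · exact show r + s + (t + 1) = N by omega

theorem cell_le_cell_of_mem_blackSet (hU : IsFlag N U) (hU' : IsFlag N U') (hU'' : IsFlag N U'')
    {r s t : ℕ} (hN : r + s + t < N) {x : Fin 3 → ℕ} (hx : x ∈ blackSet r s t) :
    cell N U U' U'' x ≤ cell N U U' U'' ![r, s, t] := by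
  rcases hx with rfl | rfl | rfl
  · exact inf_le_inf_right _ <| inf_le_inf_right _ <|
      hU.mono (i := N - (r + 1)) (j := N - r) (by omega) (by omega)
  · exact inf_le_inf_right _ <| inf_le_inf_left _ <|
      hU'.mono (i := N - (s + 1)) (j := N - s) (by omega) (by omega)
  · exact inf_le_inf_left _ <| hU''.mono (i := N - (t + 1)) (j := N - t) (by omega) (by omega)

theorem ncard_blackSet (r s t : ℕ) : (blackSet r s t).ncard = 3 :=
  Set.ncard_eq_three.mpr ⟨_, _, _, fun h => by simpa using congrFun h 0,
    fun h => by simpa using congrFun h 0, fun h => by simpa using congrFun h 1, rfl⟩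

section FiniteDimensional

variable [FiniteDimensional F V]

theorem finrank_cell_add_le (hU'' : IsFlag N U'') (hT : TotallyOpposite N U U' U'')
    {v : Fin 3 → ℕ} (hv : v 0 + v 1 + v 2 ≤ N) :
    finrank F (cell N U U' U'' v) + (v 0 + v 1 + v 2) ≤ N + 1 := by
  unfold cell
  have hdim := hU''.1 (N - v 2) (by omega)
  rcases Nat.eq_zero_or_pos (v 0 + v 1) with h0 | hpos
  · have := Submodule.finrank_mono
      (inf_le_right (a := U (N - v 0) ⊓ U' (N - v 1)) (b := U'' (N - v 2)))
    omega
  · have hbot : U (N - v 0) ⊓ U' (N - v 1) ⊓ U'' (v 0 + v 1 - 1) = ⊥ := by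
      have := hT (v 0) (v 1) (N + 1 - (v 0 + v 1)) (by omega) (by omega) (by omega) (by omega)
      rwa [show N - (N + 1 - (v 0 + v 1)) = v 0 + v 1 - 1 by omega] at this
    have := (U (N - v 0) ⊓ U' (N - v 1)).finrank_inf_add_finrank_le_of_le
      (hU''.mono (show v 0 + v 1 - 1 ≤ N - v 2 by omega) (by omega))
    rw [hbot, finrank_bot, hU''.1 _ (by omega)] at this
    omega

theorem le_finrank_cell_add (hV : finrank F V = N + 1) (hU : IsFlag N U)
    (hU' : IsFlag N U') (hU'' : IsFlag N U'') {v : Fin 3 → ℕ}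
    (hv0 : v 0 ≤ N) (hv1 : v 1 ≤ N) (hv2 : v 2 ≤ N) :
    N + 1 ≤ finrank F (cell N U U' U'' v) + (v 0 + v 1 + v 2) := by
  have h₁ := Submodule.finrank_add_finrank_le_finrank_inf_add (U (N - v 0)) (U' (N - v 1))
  have h₂ := Submodule.finrank_add_finrank_le_finrank_inf_add
    (U (N - v 0) ⊓ U' (N - v 1)) (U'' (N - v 2))
  rw [hU.1 _ (by omega), hU'.1 _ (by omega)] at h₁
  rw [hU''.1 _ (by omega)] at h₂
  unfold cell
  omega

theorem finrank_cell_eq_one (hV : finrank F V = N + 1) (hU : IsFlag N U)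
    (hU' : IsFlag N U') (hU'' : IsFlag N U'') (hT : TotallyOpposite N U U' U'')
    {v : Fin 3 → ℕ} (hv : v ∈ Delta N) :
    finrank F (cell N U U' U'' v) = 1 := by
  have hv : v 0 + v 1 + v 2 = N := hv
  have := finrank_cell_add_le hU'' hT hv.le
  have := le_finrank_cell_add hV hU hU' hU'' (v := v) (by omega) (by omega) (by omega)
  omega

theorem not_iSupIndep_cell_blackSet (hV : finrank F V = N + 1) (hU : IsFlag N U)
    (hU' : IsFlag N U') (hU'' : IsFlag N U'') (hT : TotallyOpposite N U U' U'') {r s t : ℕ}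
    (hN : r + s + t + 1 = N) : ¬ iSupIndep fun x : blackSet r s t => cell N U U' U'' x := by
  have : Finite (blackSet r s t) := by unfold blackSet; infer_instance
  have hdim : finrank F (cell N U U' U'' ![r, s, t]) + (r + s + t) ≤ N + 1 :=
    finrank_cell_add_le hU'' hT (show r + s + t ≤ N by omega)
  refine Submodule.not_iSupIndep_of_finrank_lt (W := cell N U U' U'' ![r, s, t])
    (fun x => cell_le_cell_of_mem_blackSet hU hU' hU'' (by omega) x.2) (fun x h => ?_) ?_
  · have := finrank_cell_eq_one hV hU hU' hU'' hT (blackSet_subset_Delta hN x.2)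
    rw [h, finrank_bot] at this
    exact zero_ne_one this
  · rw [Nat.card_coe_set_eq, ncard_blackSet]
    omega

end FiniteDimensional

end BA

/-- Given totally opposite flags `{U_i}, {U'_i}, {U''_i}` on an
`(N+1)`-dimensional vector space `V`, the assignment
`(r,s,t) ↦ U_{N-r} ∩ U'_{N-s} ∩ U''_{N-t}` is a Billiard Array on `V`. -/
theorem stmt11 {F V : Type*} [Field F] [AddCommGroup V] [Module F V] (N : ℕ)
    (hV : Module.finrank F V = N + 1) (U U' U'' : ℕ → Submodule F V)
    (hU : BA.IsFlag N U) (hU' : BA.IsFlag N U') (hU'' : BA.IsFlag N U'')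
    (hT : BA.TotallyOpposite N U U' U'') :
    BA.IsBilliardArray N
      (fun v => U (N - v 0) ⊓ U' (N - v 1) ⊓ U'' (N - v 2)) := by
  have : FiniteDimensional F V := .of_finrank_pos (by omega)
  refine ⟨fun v hv => BA.finrank_cell_eq_one hV hU hU' hU'' hT hv, ?_,
    fun r s t hN => BA.not_iSupIndep_cell_blackSet hV hU hU' hU'' hT hN⟩
  rintro L ⟨η, c, -, rfl⟩
  exact BA.iSupIndep_cell_line hU hU' hU'' hT η c
end

section
/- Let F be a field, N a natural number, V an (N+1)-dimensional vector space over F, and B a Billiard Array on V. Pick natural numbers r, s, t with r, s, t ≤ N, and let S_1 (resp. S_2, resp. S_3) denote the sum of the subspaces B_λ over all λ ∈ Δ_N whose first (resp. second, resp. third) coordinate is at least r (resp. s, resp. t). If r + s + t > N then S_1 ∩ S_2 ∩ S_3 = 0. If r + s + t ≤ N then S_1 ∩ S_2 ∩ S_3 equals the sum of the subspaces B_λ over all λ ∈ Δ_N with λ ≥ (r,s,t) componentwise. -/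
/-!
Each black 3-clique gives `B(u + e₀) ≤ B(u + e₁) ⊔ B(u + e₂)`. Descending along these relations,
`B_λ` lies in the span of the locations `μ` on the line `μ₀ = r` with `μ_η ≥ λ_η`, for every
`r ≤ λ₀` and `η ∈ {1, 2}`. Hence `S₁` is spanned by the line `μ₀ = r`, while `S₂` and `S₃` lie in
flags of subspaces spanned by parts of the boundary line `μ₀ = 0`. By induction on `λ₀`, starting
from the directness of that boundary line, `B_λ` meets the flag member `{μ₀ = 0, μ_η > λ_η}`
trivially. With the modular law, these facts strip off one location at a time the summands of the
line `μ₀ = r` whose second coordinate is below `s`, and then those whose third coordinate is below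
`t`; what is left is the sum over `λ ≥ (r, s, t)`.
-/

theorem IsAtom.le_sup_of_not_iSupIndep {ι α : Type*} [CompleteLattice α] [IsModularLattice α]
    {f : ι → α} {i j k : ι} (hcover : ∀ m, m = i ∨ m = j ∨ m = k) (hi : IsAtom (f i))
    (hjk : Disjoint (f j) (f k)) (hf : ¬ iSupIndep f) : f i ≤ f j ⊔ f k := by
  by_contra hle
  have hi' : Disjoint (f j ⊔ f k) (f i) := (hi.not_le_iff_disjoint.1 hle).symm
  refine hf fun m => ?_
  rcases hcover m with rfl | rfl | rfl
  · refine hi'.symm.mono_right (iSup₂_le fun n hn => ?_)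
    rcases hcover n with rfl | rfl | rfl
    · exact absurd rfl hn
    · exact le_sup_left
    · exact le_sup_right
  · refine (hjk.disjoint_sup_right_of_disjoint_sup_left hi').mono_right (iSup₂_le fun n hn => ?_)
    rcases hcover n with rfl | rfl | rfl
    · exact le_sup_right
    · exact absurd rfl hn
    · exact le_sup_left
  · refine (hjk.symm.disjoint_sup_right_of_disjoint_sup_left
      (by rwa [sup_comm])).mono_right (iSup₂_le fun n hn => ?_)
    rcases hcover n with rfl | rfl | rfl
    · exact le_sup_right
    · exact le_sup_left
    · exact absurd rfl hn

theorem biSup_inf_le_biSup_of_disjoint {ι α : Type*} [CompleteLattice α] [IsModularLattice α]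
    {x : ι → α} {A : Set ι} {ℓ : ι → ℕ} {E : ℕ → α} (hE : Antitone E) (hℓ : Set.InjOn ℓ A)
    (hle : ∀ i ∈ A, x i ≤ E (ℓ i)) (hdisj : ∀ i ∈ A, Disjoint (x i) (E (ℓ i + 1))) (k : ℕ) :
    (⨆ i ∈ A, x i) ⊓ E k ≤ ⨆ i ∈ {i ∈ A | k ≤ ℓ i}, x i := by
  induction k with
  | zero => exact inf_le_left.trans (biSup_mono fun i hi => ⟨hi, Nat.zero_le _⟩)
  | succ k ih =>
    set Q : ℕ → α := fun k => ⨆ i ∈ {i ∈ A | k ≤ ℓ i}, x i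
    have hQE : Q (k + 1) ≤ E (k + 1) := iSup₂_le fun i hi => (hle i hi.1).trans (hE hi.2)
    have hQ : Q k ⊓ E (k + 1) ≤ Q (k + 1) := by
      by_cases hk : ∃ i₀ ∈ A, ℓ i₀ = k
      · obtain ⟨i₀, hi₀, rfl⟩ := hk
        have hsplit : Q (ℓ i₀) ≤ Q (ℓ i₀ + 1) ⊔ x i₀ := iSup₂_le fun i hi => by
          rcases hi.2.eq_or_lt with h | h
          · exact (hℓ hi₀ hi.1 h) ▸ le_sup_right
          · exact le_sup_of_le_left (le_biSup (fun i => x i) ⟨hi.1, h⟩)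
        calc Q (ℓ i₀) ⊓ E (ℓ i₀ + 1) ≤ (Q (ℓ i₀ + 1) ⊔ x i₀) ⊓ E (ℓ i₀ + 1) :=
              inf_le_inf_right _ hsplit
          _ = Q (ℓ i₀ + 1) := by
              rw [sup_inf_assoc_of_le _ hQE, (hdisj i₀ hi₀).eq_bot, sup_bot_eq]
      · refine inf_le_left.trans (biSup_mono fun i hi => ⟨hi.1, ?_⟩)
        exact (hi.2.eq_or_lt).resolve_left (fun h => hk ⟨i, hi.1, h.symm⟩)
    calc (⨆ i ∈ A, x i) ⊓ E (k + 1) ≤ (⨆ i ∈ A, x i) ⊓ E k ⊓ E (k + 1) :=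
          le_inf (inf_le_inf_left _ (hE k.le_succ)) inf_le_right
      _ ≤ Q k ⊓ E (k + 1) := inf_le_inf_right _ ih
      _ ≤ Q (k + 1) := hQ

namespace BA

def line (N : ℕ) (η : Fin 3) (c : ℕ) : Set (Fin 3 → ℕ) := {v ∈ Delta N | v η = c}

variable {F V : Type*} [Field F] [AddCommGroup V] [Module F V]

def lineFlag (N : ℕ) (B : (Fin 3 → ℕ) → Submodule F V) (r : ℕ) (η : Fin 3) (k : ℕ) :
    Submodule F V :=
  ⨆ v ∈ {v ∈ line N 0 r | k ≤ v η}, B v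

lemma lineFlag_antitone (N : ℕ) (B : (Fin 3 → ℕ) → Submodule F V) (r : ℕ) (η : Fin 3) :
    Antitone (lineFlag N B r η) :=
  fun _ _ hk => biSup_mono fun _ hv => ⟨hv.1, hk.trans hv.2⟩

lemma apply_le_of_mem_delta {N : ℕ} {w : Fin 3 → ℕ} (hw : w ∈ Delta N) (η : Fin 3) :
    w η ≤ N := by
  simp only [Delta, Set.mem_ofPred_eq] at hw
  fin_cases η <;> simp <;> omega

lemma add_single_mem_delta {N : ℕ} {u : Fin 3 → ℕ} (hu : u 0 + u 1 + u 2 + 1 = N) (i : Fin 3) :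
    u + Pi.single i 1 ∈ Delta N := by
  simp only [Delta, Set.mem_ofPred_eq]
  fin_cases i <;> simp <;> omega

lemma exists_eq_add_single_zero {N : ℕ} {w : Fin 3 → ℕ} (hw : w ∈ Delta N) (h : w 0 ≠ 0) :
    ∃ u : Fin 3 → ℕ, u 0 + u 1 + u 2 + 1 = N ∧ w = u + Pi.single 0 1 := by
  simp only [Delta, Set.mem_ofPred_eq] at hw
  refine ⟨w - Pi.single 0 1, by simp; omega, funext fun m => ?_⟩
  fin_cases m <;> simp; omega

lemma exists_ne_zero_and_ne {η : Fin 3} (hη : η ≠ 0) : ∃ η' : Fin 3, η' ≠ 0 ∧ η ≠ η' := by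
  fin_cases η
  exacts [absurd rfl hη, ⟨2, by decide, by decide⟩, ⟨1, by decide, by decide⟩]

lemma injOn_apply_line_zero {N r : ℕ} {η : Fin 3} (hη : η ≠ 0) :
    Set.InjOn (· η) (line N 0 r) := by
  rintro v ⟨hv, hv0⟩ w ⟨hw, hw0⟩ (h : v η = w η)
  simp only [Delta, Set.mem_ofPred_eq] at hv hw
  funext m
  fin_cases η <;> fin_cases m <;> simp_all <;> omega

lemma blackSet_eq_range (u : Fin 3 → ℕ) :
    blackSet (u 0) (u 1) (u 2) = Set.range fun i => u + Pi.single i 1 := by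
  have h (i : Fin 3) : u + Pi.single i 1 = ![u 0 + (Pi.single i 1 : Fin 3 → ℕ) 0,
      u 1 + (Pi.single i 1 : Fin 3 → ℕ) 1, u 2 + (Pi.single i 1 : Fin 3 → ℕ) 2] := by
    funext m; fin_cases m <;> rfl
  ext v
  simp [blackSet, h, Fin.exists_fin_succ, eq_comm]

namespace IsBilliardArray

variable {N : ℕ} {B : (Fin 3 → ℕ) → Submodule F V}

lemma disjoint_biSup_line (hB : IsBilliardArray N B) {η : Fin 3} {c : ℕ} {w : Fin 3 → ℕ}
    (hw : w ∈ line N η c) {A : Set (Fin 3 → ℕ)} (hA : A ⊆ line N η c) (hwA : w ∉ A) :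
    Disjoint (B w) (⨆ v ∈ A, B v) := by
  have hc : c ≤ N := hw.2 ▸ apply_le_of_mem_delta hw.1 η
  have hind := hB.2.1 _ ⟨η, c, hc, rfl⟩
  refine (hind.disjoint_biSup (x := ⟨w, hw⟩) (y := Subtype.val ⁻¹' A) hwA).mono_right ?_
  exact iSup₂_le fun v hv => le_biSup (fun x : line N η c => B x.1) (i := ⟨v, hA hv⟩) hv

lemma disjoint_of_mem_line (hB : IsBilliardArray N B) {η : Fin 3} {c : ℕ} {v w : Fin 3 → ℕ}
    (hv : v ∈ line N η c) (hw : w ∈ line N η c) (hvw : v ≠ w) : Disjoint (B v) (B w) := by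
  simpa using hB.disjoint_biSup_line hv (Set.singleton_subset_iff.2 hw) hvw

lemma le_sup_of_add_single (hB : IsBilliardArray N B) {u : Fin 3 → ℕ}
    (hu : u 0 + u 1 + u 2 + 1 = N) {i j k : Fin 3} (hij : i ≠ j) (hik : i ≠ k) (hjk : j ≠ k) :
    B (u + Pi.single i 1) ≤ B (u + Pi.single j 1) ⊔ B (u + Pi.single k 1) := by
  have hmem (m : Fin 3) : u + Pi.single m 1 ∈ blackSet (u 0) (u 1) (u 2) :=
    blackSet_eq_range u ▸ Set.mem_range_self m
  have hcover (x : blackSet (u 0) (u 1) (u 2)) :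
      x = ⟨_, hmem i⟩ ∨ x = ⟨_, hmem j⟩ ∨ x = ⟨_, hmem k⟩ := by
    obtain ⟨x, hx⟩ := x
    obtain ⟨m, rfl⟩ := blackSet_eq_range u ▸ hx
    have hfin : ∀ m i j k : Fin 3, i ≠ j → i ≠ k → j ≠ k → m = i ∨ m = j ∨ m = k := by decide
    rcases hfin m i j k hij hik hjk with rfl | rfl | rfl <;> simp
  have hline (m : Fin 3) (hm : m ≠ i) : u + Pi.single m 1 ∈ line N i (u i) :=
    ⟨add_single_mem_delta hu m, by simp [hm.symm]⟩
  refine IsAtom.le_sup_of_not_iSupIndep (f := fun x : blackSet _ _ _ => B x.1) hcover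
    (Submodule.isAtom_iff_finrank_eq_one.2 (hB.1 _ (add_single_mem_delta hu i)))
    (hB.disjoint_of_mem_line (hline j hij.symm) (hline k hik.symm) ?_) (hB.2.2 _ _ _ hu)
  intro h
  simpa [hjk] using congrFun h j

lemma le_lineFlag (hB : IsBilliardArray N B) {η : Fin 3} (hη : η ≠ 0) {r : ℕ} {w : Fin 3 → ℕ}
    (hw : w ∈ Delta N) (hr : r ≤ w 0) : B w ≤ lineFlag N B r η (w η) := by
  obtain ⟨η', hη', hηη'⟩ := exists_ne_zero_and_ne hη
  obtain ⟨d, hd⟩ := Nat.exists_eq_add_of_le hr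
  induction d generalizing w with
  | zero => exact le_biSup B ⟨⟨hw, hd⟩, le_rfl⟩
  | succ d ih =>
    obtain ⟨u, hu, rfl⟩ := exists_eq_add_single_zero hw (by omega)
    have hu0 : u 0 = r + d := by simpa [← add_assoc] using hd
    refine (hB.le_sup_of_add_single hu hη.symm hη'.symm hηη').trans (sup_le ?_ ?_)
    · refine (ih (add_single_mem_delta hu η) ?_ ?_).trans (lineFlag_antitone N B r η ?_) <;>
        simp [hη, hu0]
    · refine (ih (add_single_mem_delta hu η') ?_ ?_).trans_eq ?_ <;>
        simp [hη, hη', hηη', hu0]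

lemma disjoint_lineFlag (hB : IsBilliardArray N B) {η : Fin 3} (hη : η ≠ 0) {w : Fin 3 → ℕ}
    (hw : w ∈ Delta N) :
    Disjoint (B w) (lineFlag N B 0 η (w η + 1)) := by
  obtain ⟨η', hη', hηη'⟩ := exists_ne_zero_and_ne hη
  induction hd : w 0 generalizing w with
  | zero =>
    refine hB.disjoint_biSup_line (η := 0) ⟨hw, hd⟩ (fun v hv => hv.1) ?_
    exact fun hw' => absurd hw'.2 (by omega)
  | succ n ih =>
    obtain ⟨u, hu, rfl⟩ := exists_eq_add_single_zero hw (by omega)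
    rw [show (u + Pi.single 0 1 : Fin 3 → ℕ) η = u η by simp [hη]]
    set L := lineFlag N B 0 η (u η + 1)
    have h₁ : B (u + Pi.single η 1) ≤ L :=
      (hB.le_lineFlag hη (add_single_mem_delta hu η) (Nat.zero_le _)).trans_eq (by simp [L])
    have h₂ : Disjoint (B (u + Pi.single η' 1)) L := by
      simpa [hηη'] using ih (add_single_mem_delta hu η') (by simpa [hη'] using hd)
    have h₃ : Disjoint (B (u + Pi.single 0 1)) (B (u + Pi.single η 1)) := by
      refine hB.disjoint_of_mem_line (η := η') (c := u η') ⟨hw, by simp [hη']⟩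
        ⟨add_single_mem_delta hu η, by simp [hηη']⟩ fun h => ?_
      simpa [hη] using congrFun h η
    have h₄ : B (u + Pi.single 0 1) ⊓ L ≤ B (u + Pi.single η 1) :=
      calc B (u + Pi.single 0 1) ⊓ L
          ≤ (B (u + Pi.single η 1) ⊔ B (u + Pi.single η' 1)) ⊓ L :=
            inf_le_inf_right _ (hB.le_sup_of_add_single hu hη.symm hη'.symm hηη')
        _ = B (u + Pi.single η 1) := by rw [sup_inf_assoc_of_le _ h₁, h₂.eq_bot, sup_bot_eq]
    exact disjoint_iff_inf_le.2 ((le_inf inf_le_left h₄).trans h₃.le_bot)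

lemma inf_le_biSup (hB : IsBilliardArray N B) (r s t : ℕ) :
    (⨆ v ∈ {w | w ∈ Delta N ∧ r ≤ w 0}, B v) ⊓ (⨆ v ∈ {w | w ∈ Delta N ∧ s ≤ w 1}, B v) ⊓
        (⨆ v ∈ {w | w ∈ Delta N ∧ t ≤ w 2}, B v) ≤
      ⨆ v ∈ {w | w ∈ Delta N ∧ r ≤ w 0 ∧ s ≤ w 1 ∧ t ≤ w 2}, B v := by
  have h1 : (1 : Fin 3) ≠ 0 := by decide
  have h2 : (2 : Fin 3) ≠ 0 := by decide
  have hS₁ : ⨆ v ∈ {w | w ∈ Delta N ∧ r ≤ w 0}, B v ≤ ⨆ v ∈ line N 0 r, B v :=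
    iSup₂_le fun w hw => (hB.le_lineFlag h1 hw.1 hw.2).trans (biSup_mono fun _ hv => hv.1)
  have hS (η : Fin 3) (hη : η ≠ 0) (k : ℕ) :
      ⨆ v ∈ {w | w ∈ Delta N ∧ k ≤ w η}, B v ≤ lineFlag N B 0 η k :=
    iSup₂_le fun w hw =>
      (hB.le_lineFlag hη hw.1 (Nat.zero_le _)).trans (lineFlag_antitone N B 0 η hw.2)
  have hflag (η : Fin 3) (hη : η ≠ 0) (A : Set (Fin 3 → ℕ)) (hA : A ⊆ line N 0 r) (k : ℕ) :
      (⨆ v ∈ A, B v) ⊓ lineFlag N B 0 η k ≤ ⨆ v ∈ {v ∈ A | k ≤ v η}, B v :=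
    biSup_inf_le_biSup_of_disjoint (lineFlag_antitone N B 0 η)
      ((injOn_apply_line_zero hη).mono hA)
      (fun w hw => hB.le_lineFlag hη (hA hw).1 (Nat.zero_le _))
      (fun w hw => hB.disjoint_lineFlag hη (hA hw).1) k
  calc _ ≤ (⨆ v ∈ line N 0 r, B v) ⊓ lineFlag N B 0 1 s ⊓ lineFlag N B 0 2 t :=
        inf_le_inf (inf_le_inf hS₁ (hS 1 h1 s)) (hS 2 h2 t)
    _ ≤ (⨆ v ∈ {v ∈ line N 0 r | s ≤ v 1}, B v) ⊓ lineFlag N B 0 2 t :=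
        inf_le_inf_right _ (hflag 1 h1 _ subset_rfl s)
    _ ≤ ⨆ v ∈ {v ∈ {v ∈ line N 0 r | s ≤ v 1} | t ≤ v 2}, B v :=
        hflag 2 h2 _ (fun _ hv => hv.1) t
    _ ≤ _ := biSup_mono fun v hv => ⟨hv.1.1.1, hv.1.1.2.ge, hv.1.2, hv.2⟩

end IsBilliardArray

end BA

theorem stmt13_general {F V : Type*} [Field F] [AddCommGroup V] [Module F V] (N : ℕ)
    (B : (Fin 3 → ℕ) → Submodule F V)
    (hB : BA.IsBilliardArray N B)
    (r s t : ℕ) :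
    (N < r + s + t →
      (⨆ v ∈ {w | w ∈ BA.Delta N ∧ r ≤ w 0}, B v) ⊓
        (⨆ v ∈ {w | w ∈ BA.Delta N ∧ s ≤ w 1}, B v) ⊓
        (⨆ v ∈ {w | w ∈ BA.Delta N ∧ t ≤ w 2}, B v) = ⊥) ∧
    (r + s + t ≤ N →
      (⨆ v ∈ {w | w ∈ BA.Delta N ∧ r ≤ w 0}, B v) ⊓
        (⨆ v ∈ {w | w ∈ BA.Delta N ∧ s ≤ w 1}, B v) ⊓
        (⨆ v ∈ {w | w ∈ BA.Delta N ∧ t ≤ w 2}, B v) =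
      ⨆ v ∈ {w | w ∈ BA.Delta N ∧ r ≤ w 0 ∧ s ≤ w 1 ∧ t ≤ w 2}, B v) := by
  refine ⟨fun hN => le_bot_iff.1 ((hB.inf_le_biSup r s t).trans (iSup₂_le ?_)),
    fun _ => le_antisymm (hB.inf_le_biSup r s t) (iSup₂_le ?_)⟩
  · rintro w ⟨hw, hr, hs, ht⟩
    have : w 0 + w 1 + w 2 = N := hw
    omega
  · rintro w ⟨hw, hr, hs, ht⟩
    exact le_inf (le_inf (le_biSup B ⟨hw, hr⟩) (le_biSup B ⟨hw, hs⟩)) (le_biSup B ⟨hw, ht⟩)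

/-- For a Billiard Array `B` on `V` and `r, s, t ≤ N`, let `S₁` (resp. `S₂`,
`S₃`) be the sum of the `B_λ` over locations `λ` whose first (resp. second,
third) coordinate is at least `r` (resp. `s`, `t`). If `r + s + t > N` then
`S₁ ∩ S₂ ∩ S₃ = 0`; if `r + s + t ≤ N` then `S₁ ∩ S₂ ∩ S₃` equals the sum of
the `B_λ` over the locations `λ ≥ (r,s,t)` componentwise. -/
theorem stmt13 {F V : Type*} [Field F] [AddCommGroup V] [Module F V] (N : ℕ)
    (hV : Module.finrank F V = N + 1) (B : (Fin 3 → ℕ) → Submodule F V)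
    (hB : BA.IsBilliardArray N B)
    (r s t : ℕ) (hr : r ≤ N) (hs : s ≤ N) (ht : t ≤ N) :
    (N < r + s + t →
      (⨆ v ∈ {w | w ∈ BA.Delta N ∧ r ≤ w 0}, B v) ⊓
        (⨆ v ∈ {w | w ∈ BA.Delta N ∧ s ≤ w 1}, B v) ⊓
        (⨆ v ∈ {w | w ∈ BA.Delta N ∧ t ≤ w 2}, B v) = ⊥) ∧
    (r + s + t ≤ N →
      (⨆ v ∈ {w | w ∈ BA.Delta N ∧ r ≤ w 0}, B v) ⊓
        (⨆ v ∈ {w | w ∈ BA.Delta N ∧ s ≤ w 1}, B v) ⊓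
        (⨆ v ∈ {w | w ∈ BA.Delta N ∧ t ≤ w 2}, B v) =
      ⨆ v ∈ {w | w ∈ BA.Delta N ∧ r ≤ w 0 ∧ s ≤ w 1 ∧ t ≤ w 2}, B v) :=
  stmt13_general N B hB r s t
end
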